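/- Let G : J × J' → J be a solvable permutable code that is x₀-solvable, and define the operation ∙ on J by x ∙ y = G(x,v) where v is the unique element of J' with G(x₀,v) = y. Then for all x,y,z ∈ J with x < y, the set N(x,z;y) = {n ∈ ℕ⁺ : x_y^n is defined and x_y^n ≤ z} is finite, where the sequence (x_y^n) is defined recursively by x_y^1 = x and, whenever x_y^{n-1} is defined and there exists x' ∈ J with y ∙ x_y^{n-1} = x ∙ x', by x_y^n = x'. -/

import Mathlib

/-!
If `N(x,z;y)` were infinite, the sequence `x_y^n` would be defined for every `n`; since
`x ∙ a < y ∙ a = x ∙ x_y^{n+1}` for `a = x_y^n`, it is strictly increasing, and it is bounded by `z`.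
Transported to `J'` through the inverse of the strictly monotone map `G(x₀, ·)`, it becomes a
monotone sequence `vₙ` trapped in a compact subinterval of `J'`, hence convergent to some `V ∈ J'`.
Passing to the limit in `G(y, vₙ) = G(x, vₙ₊₁)` gives `G(y, V) = G(x, V)`, contradicting `x < y`.
-/

/-- `J` is a nonempty nondegenerate interval of nonnegative reals. -/
def NondegNonnegInterval (J : Set ℝ) : Prop :=
  J.OrdConnected ∧ (∃ a ∈ J, ∃ b ∈ J, a ≠ b) ∧ ∀ x ∈ J, 0 ≤ x

/-- A (numerical) code `G : J × J' → H`: onto `H`, strictly increasing in the first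
variable, strictly monotonic in the second, and continuous in both. -/
def IsCode (J J' H : Set ℝ) (G : ℝ → ℝ → ℝ) : Prop :=
  (∀ x ∈ J, ∀ s ∈ J', G x s ∈ H) ∧
  (∀ p ∈ H, ∃ x ∈ J, ∃ s ∈ J', G x s = p) ∧
  (∀ s ∈ J', StrictMonoOn (fun x => G x s) J) ∧
  ((∀ x ∈ J, StrictMonoOn (fun s => G x s) J') ∨
    (∀ x ∈ J, StrictAntiOn (fun s => G x s) J')) ∧
  (∀ s ∈ J', ContinuousOn (fun x => G x s) J) ∧
  (∀ x ∈ J, ContinuousOn (fun s => G x s) J')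

/-- Solvability condition [S1]: if `G(x,t) < p ∈ H`, there is `w ∈ J` with `G(w,t) = p`. -/
def SolvS1 (J J' H : Set ℝ) (G : ℝ → ℝ → ℝ) : Prop :=
  ∀ x ∈ J, ∀ t ∈ J', ∀ p ∈ H, G x t < p → ∃ w ∈ J, G w t = p

/-- Solvability condition [S2]: `G` is `x₀`-solvable, i.e. for every `p ∈ H` there is
`v ∈ J'` with `G(x₀,v) = p`. -/
def X0Solvable (J J' H : Set ℝ) (G : ℝ → ℝ → ℝ) (x₀ : ℝ) : Prop :=
  x₀ ∈ J ∧ ∀ p ∈ H, ∃ v ∈ J', G x₀ v = p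

/-- `G` is permutable: `G(G(x,s),t) = G(G(x,t),s)`. -/
def Permutable (J J' : Set ℝ) (G : ℝ → ℝ → ℝ) : Prop :=
  ∀ x ∈ J, ∀ s ∈ J', ∀ t ∈ J', G (G x s) t = G (G x t) s

/-- The partial recursive sequence `x_y^n` built from the operation `∙`:
`x_y^1 = x`, and `x_y^n = x'` whenever `x_y^{n-1} = a` is defined and `x' ∈ J`
satisfies `y ∙ a = x ∙ x'`. -/
inductive BulletSeq (J : Set ℝ) (bull : ℝ → ℝ → ℝ) (x y : ℝ) : ℕ → ℝ → Prop
  | one : BulletSeq J bull x y 1 x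
  | succ {n : ℕ} {a x' : ℝ} : BulletSeq J bull x y n a → x' ∈ J →
      bull y a = bull x x' → BulletSeq J bull x y (n + 1) x'

open Filter Set Topology

namespace BulletSeq

variable {J : Set ℝ} {op : ℝ → ℝ → ℝ} {x y : ℝ} {n : ℕ} {a b : ℝ}

theorem pos (h : BulletSeq J op x y n a) : 0 < n := by
  cases h <;> omega

theorem mem (hx : x ∈ J) (h : BulletSeq J op x y n a) : a ∈ J := by
  cases h with
  | one => exact hx
  | succ _ ha _ => exact ha

theorem exists_of_le (h : BulletSeq J op x y n a) {k : ℕ} (hk : 0 < k) (hkn : k ≤ n) :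
    ∃ b, BulletSeq J op x y k b := by
  induction h with
  | one => exact ⟨x, by rw [show k = 1 by omega]; exact one⟩
  | succ hprev ha heq ih =>
    rcases hkn.eq_or_lt with rfl | hlt
    · exact ⟨_, succ hprev ha heq⟩
    · exact ih (by omega)

theorem unique (hinj : InjOn (op x) J) (ha : BulletSeq J op x y n a)
    (hb : BulletSeq J op x y n b) : a = b := by
  induction ha generalizing b with
  | one =>
    cases hb with
    | one => rfl
    | succ hprev _ _ => exact absurd hprev.pos (lt_irrefl 0)
  | succ hprev ha heq ih =>
    cases hb with
    | one => exact absurd hprev.pos (lt_irrefl 0)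
    | succ hprev' hb heq' =>
      rw [ih hprev'] at heq
      exact hinj ha hb (heq.symm.trans heq')

theorem map_eq_map_succ (hinj : InjOn (op x) J) (ha : BulletSeq J op x y n a)
    (hb : BulletSeq J op x y (n + 1) b) : op y a = op x b := by
  cases hb with
  | one => exact absurd ha.pos (lt_irrefl 0)
  | succ hprev _ heq => rwa [hprev.unique hinj ha] at heq

theorem exists_strictMono_of_infinite (hx : x ∈ J) (hop : StrictMonoOn (op x) J)
    (hlt : ∀ w ∈ J, op x w < op y w) {z : ℝ}
    (hinf : {n : ℕ | 0 < n ∧ ∃ a, BulletSeq J op x y n a ∧ a ≤ z}.Infinite) :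
    ∃ f : ℕ → ℝ, (∀ n, f n ∈ J) ∧ StrictMono f ∧ (∀ n, f n ≤ z) ∧
      ∀ n, op y (f n) = op x (f (n + 1)) := by
  have hall : ∀ n : ℕ, ∃ a, BulletSeq J op x y (n + 1) a := fun n => by
    obtain ⟨m, ⟨-, c, hc, -⟩, hm⟩ := hinf.exists_gt n
    exact hc.exists_of_le n.succ_pos hm
  choose f hf using hall
  have hfJ : ∀ n, f n ∈ J := fun n => (hf n).mem hx
  have hstep : ∀ n, op y (f n) = op x (f (n + 1)) := fun n =>
    (hf n).map_eq_map_succ hop.injOn (hf (n + 1))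
  have hmono : StrictMono f := strictMono_nat_of_lt_succ fun n =>
    (hop.lt_iff_lt (hfJ n) (hfJ (n + 1))).1 ((hlt _ (hfJ n)).trans_eq (hstep n))
  refine ⟨f, hfJ, hmono, fun n => ?_, hstep⟩
  obtain ⟨m, ⟨hm0, c, hc, hcz⟩, hm⟩ := hinf.exists_gt (n + 1)
  obtain ⟨k, rfl⟩ := Nat.exists_eq_succ_of_ne_zero hm0.ne'
  calc f n ≤ f k := hmono.monotone (by omega)
    _ = c := (hf k).unique hop.injOn hc
    _ ≤ z := hcz

end BulletSeq

namespace Set.OrdConnected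

variable {S : Set ℝ} {v : ℕ → ℝ} {b : ℝ}

theorem exists_tendsto_of_monotone (hS : S.OrdConnected) (hv : Monotone v) (hvS : ∀ n, v n ∈ S)
    (hb : b ∈ S) (hvb : ∀ n, v n ≤ b) : ∃ V ∈ S, Tendsto v atTop (𝓝 V) :=
  have hbdd : BddAbove (range v) := ⟨b, forall_mem_range.2 hvb⟩
  ⟨⨆ n, v n, hS.out (hvS 0) hb ⟨le_ciSup hbdd 0, ciSup_le hvb⟩, tendsto_atTop_ciSup hv hbdd⟩

theorem exists_tendsto_of_antitone (hS : S.OrdConnected) (hv : Antitone v) (hvS : ∀ n, v n ∈ S)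
    (hb : b ∈ S) (hvb : ∀ n, b ≤ v n) : ∃ V ∈ S, Tendsto v atTop (𝓝 V) :=
  have hbdd : BddBelow (range v) := ⟨b, forall_mem_range.2 hvb⟩
  ⟨⨅ n, v n, hS.out hb (hvS 0) ⟨le_ciInf hvb, ciInf_le hbdd 0⟩, tendsto_atTop_ciInf hv hbdd⟩

theorem exists_tendsto_of_monotone_comp (hS : S.OrdConnected) {φ : ℝ → ℝ}
    (hφ : StrictMonoOn φ S ∨ StrictAntiOn φ S) (hvS : ∀ n, v n ∈ S) (hv : Monotone (φ ∘ v))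
    (hb : b ∈ S) (hvb : ∀ n, φ (v n) ≤ φ b) : ∃ V ∈ S, Tendsto v atTop (𝓝 V) := by
  rcases hφ with hφ | hφ
  · exact hS.exists_tendsto_of_monotone
      (fun i j hij => (hφ.le_iff_le (hvS i) (hvS j)).1 (hv hij)) hvS hb
      fun n => (hφ.le_iff_le (hvS n) hb).1 (hvb n)
  · exact hS.exists_tendsto_of_antitone
      (fun i j hij => (hφ.le_iff_ge (hvS i) (hvS j)).1 (hv hij)) hvS hb
      fun n => (hφ.le_iff_ge (hvS n) hb).1 (hvb n)

end Set.OrdConnected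

theorem eq_of_tendsto_of_map_eq_map_succ {X Y : Type*} [TopologicalSpace X] [TopologicalSpace Y]
    [T2Space Y] {S : Set X} {g h : X → Y} {v : ℕ → X} {V : X} (hg : ContinuousWithinAt g S V)
    (hh : ContinuousWithinAt h S V) (hv : Tendsto v atTop (𝓝 V)) (hvS : ∀ n, v n ∈ S)
    (hstep : ∀ n, g (v n) = h (v (n + 1))) : g V = h V := by
  have hv' : Tendsto v atTop (𝓝[S] V) :=
    tendsto_nhdsWithin_iff.2 ⟨hv, Eventually.of_forall hvS⟩
  refine tendsto_nhds_unique (hg.tendsto.comp hv') ?_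
  rw [show g ∘ v = fun n => h (v (n + 1)) from funext hstep]
  exact hh.tendsto.comp (hv'.comp (tendsto_add_atTop_nat 1))

/-- `G(u, ·)` and `G(x₀, ·)` are monotone in the same direction. -/
theorem strictMonoOn_comp_rightInvOn {J J' : Set ℝ} {G : ℝ → ℝ → ℝ} {ψ : ℝ → ℝ} {x₀ u : ℝ}
    (hG : (∀ x ∈ J, StrictMonoOn (fun s => G x s) J') ∨
      (∀ x ∈ J, StrictAntiOn (fun s => G x s) J'))
    (hx₀ : x₀ ∈ J) (hu : u ∈ J) (hψJ' : ∀ p ∈ J, ψ p ∈ J') (hψ : ∀ p ∈ J, G x₀ (ψ p) = p) :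
    StrictMonoOn (fun p => G u (ψ p)) J := by
  intro a ha b hb hab
  have h₀ : G x₀ (ψ a) < G x₀ (ψ b) := by rwa [hψ a ha, hψ b hb]
  rcases hG with hG | hG
  · exact hG u hu (hψJ' a ha) (hψJ' b hb) (((hG x₀ hx₀).lt_iff_lt (hψJ' a ha) (hψJ' b hb)).1 h₀)
  · exact hG u hu (hψJ' b hb) (hψJ' a ha) (((hG x₀ hx₀).lt_iff_gt (hψJ' a ha) (hψJ' b hb)).1 h₀)

theorem bullet_archimedean_general (J J' : Set ℝ) (G : ℝ → ℝ → ℝ) (x₀ : ℝ)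
    (bull : ℝ → ℝ → ℝ)
    (hJ' : NondegNonnegInterval J')
    (hcode : IsCode J J' J G)
    (hS2 : X0Solvable J J' J G x₀)
    (hbull : ∀ u ∈ J, ∀ w ∈ J, ∀ v ∈ J', G x₀ v = w → bull u w = G u v) :
    ∀ x ∈ J, ∀ y ∈ J, ∀ z ∈ J, x < y →
      {n : ℕ | 0 < n ∧ ∃ a, BulletSeq J bull x y n a ∧ a ≤ z}.Finite := by
  intro x hx y hy z hz hxy
  obtain ⟨-, -, hmono₁, hmono₂, -, hcont₂⟩ := hcode
  choose! ψ hψJ' hψ using hS2.2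
  have hbullψ : ∀ u ∈ J, ∀ w ∈ J, bull u w = G u (ψ w) := fun u hu w hw =>
    hbull u hu w hw _ (hψJ' w hw) (hψ w hw)
  have hstrict : StrictMonoOn (bull x) J := fun a ha b hb hab => by
    simpa only [hbullψ x hx a ha, hbullψ x hx b hb] using
      strictMonoOn_comp_rightInvOn hmono₂ hS2.1 hx hψJ' hψ ha hb hab
  have hlt : ∀ w ∈ J, bull x w < bull y w := fun w hw => by
    rw [hbullψ x hx w hw, hbullψ y hy w hw]
    exact hmono₁ _ (hψJ' w hw) hx hy hxy
  by_contra hinf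
  obtain ⟨f, hfJ, hf, hfz, hstep⟩ :=
    BulletSeq.exists_strictMono_of_infinite hx hstrict hlt hinf
  obtain ⟨V, hV, hlim⟩ := hJ'.1.exists_tendsto_of_monotone_comp
    (hmono₂.imp (· x₀ hS2.1) (· x₀ hS2.1)) (v := ψ ∘ f) (fun n => hψJ' _ (hfJ n))
    (fun i j hij => by simpa only [Function.comp, hψ _ (hfJ _)] using hf.monotone hij)
    (hψJ' z hz) fun n => by simpa only [Function.comp, hψ _ (hfJ n), hψ z hz] using hfz n
  have hVeq : G y V = G x V := eq_of_tendsto_of_map_eq_map_succ (hcont₂ y hy V hV)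
    (hcont₂ x hx V hV) hlim (fun n => hψJ' _ (hfJ n)) fun n => by
      simpa only [Function.comp, ← hbullψ _ hy _ (hfJ n), ← hbullψ _ hx _ (hfJ (n + 1))]
        using hstep n
  exact (hmono₁ V hV hx hy hxy).ne' hVeq

/-- For a solvable permutable code `G`, the Archimedean-type condition (v) holds:
for `x < y` in `J` and `z ∈ J`, the set
`N(x,z;y) = {n ∈ ℕ⁺ : x_y^n is defined and x_y^n ≤ z}` is finite. -/
theorem bullet_archimedean (J J' : Set ℝ) (G : ℝ → ℝ → ℝ) (x₀ : ℝ)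
    (bull : ℝ → ℝ → ℝ)
    (hJ : NondegNonnegInterval J) (hJ' : NondegNonnegInterval J')
    (hcode : IsCode J J' J G)
    (hS1 : SolvS1 J J' J G) (hS2 : X0Solvable J J' J G x₀)
    (hperm : Permutable J J' G)
    (hbull : ∀ u ∈ J, ∀ w ∈ J, ∀ v ∈ J', G x₀ v = w → bull u w = G u v) :
    ∀ x ∈ J, ∀ y ∈ J, ∀ z ∈ J, x < y →
      {n : ℕ | 0 < n ∧ ∃ a, BulletSeq J bull x y n a ∧ a ≤ z}.Finite :=
  bullet_archimedean_general J J' G x₀ bull hJ' hcode hS2 hbull
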